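/- arXiv:1409.3127 — 3 statements merged into one kernel-verified Lean document; each statement's English description precedes it below -/
import Mathlib

section
/- Fix n ≥ 2. For 1 ≤ i ≤ n+1 let L_i be the n-face of I^{n+1} whose digit at position i is 0 if i is odd and 1 if i is even (asterisks elsewhere), and let R_j be the n-face whose digit at position j is 1 if j is odd and 0 if j is even (asterisks elsewhere). Then for all i ≠ j, the (n−1)-face L_i ∩ R_j is either an incoming subface of both L_i and R_j, or an outgoing subface of both L_i and R_j. -/
/-- A face of the `N`-dimensional cube `I^N`, encoded as a function assigning to each
coordinate position either a digit (`some false` = 0, `some true` = 1) or an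
asterisk (`none`). -/
abbrev CubeFace (N : ℕ) := Fin N → Option Bool

/-- `τ` is a `k`-face: exactly `k` positions carry an asterisk. -/
def IsFace {N : ℕ} (k : ℕ) (τ : CubeFace N) : Prop :=
  (Finset.filter (fun i => τ i = none) Finset.univ).card = k

/-- The digit `κ` associated to the asterisk position `p` of `f`: if `p` is the `k`-th
asterisk position of `f` (counting 1-based from the left), then `κ = 0` (i.e. `false`)
for odd `k` and `κ = 1` (i.e. `true`) for even `k`.  Equivalently, `κ` is `true` iff the
number of asterisk positions strictly before `p` is odd. -/
def kappa {N : ℕ} (f : CubeFace N) (p : Fin N) : Bool :=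
  decide (Odd ((Finset.filter (fun q => q < p ∧ f q = none) Finset.univ).card))

/-- `g` is obtained from `f` by replacing the asterisk at position `p` by the digit `d`. -/
def SubfaceAt {N : ℕ} (f g : CubeFace N) (p : Fin N) (d : Bool) : Prop :=
  f p = none ∧ g p = some d ∧ ∀ q, q ≠ p → g q = f q

/-- `g` is an incoming subface of `f`: it is obtained from `f` by replacing the asterisk
at some position `p` by the digit `κ(f, p)`. -/
def Incoming {N : ℕ} (f g : CubeFace N) : Prop := ∃ p, SubfaceAt f g p (kappa f p)

/-- `g` is an outgoing subface of `f`: it is obtained from `f` by replacing the asterisk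
at some position `p` by the digit different from `κ(f, p)`. -/
def Outgoing {N : ℕ} (f g : CubeFace N) : Prop := ∃ p, SubfaceAt f g p (!kappa f p)

/-- The order of a face `g`: the number of `n`-faces of the cube for which `g` is an
incoming subface. -/
noncomputable def faceOrder {N : ℕ} (n : ℕ) (g : CubeFace N) : ℕ :=
  Nat.card {f : CubeFace N // IsFace n f ∧ Incoming f g}

/-- The `n`-face `L_i` of the `(n+1)`-cube: digit 0 at position `i` if the 1-based
position is odd, digit 1 if it is even, asterisks elsewhere. -/
def Lface (n : ℕ) (i : Fin (n + 1)) : CubeFace (n + 1) :=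
  fun j => if j = i then some (decide (Odd (i : ℕ))) else none

/-- The `n`-face `R_j` of the `(n+1)`-cube: digit 1 at position `j` if the 1-based
position is odd, digit 0 if it is even, asterisks elsewhere. -/
def Rface (n : ℕ) (j : Fin (n + 1)) : CubeFace (n + 1) :=
  fun q => if q = j then some (decide (Even (j : ℕ))) else none

/-- The `(n-1)`-face `L_i ∩ R_j`: digits at positions `i` and `j` as in `L_i` and `R_j`,
asterisks elsewhere. -/
def LRcap (n : ℕ) (i j : Fin (n + 1)) : CubeFace (n + 1) :=
  fun q => if q = i then some (decide (Odd (i : ℕ)))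
           else if q = j then some (decide (Even (j : ℕ))) else none

/-!
In a face whose only digit sits at position `a`, the asterisks before an asterisk position `p`
are the positions `< p` other than `a`, so `κ` at `p` is `Odd p` (for 0-based `p`) when
`p < a`, and `Even p` when `a < p`. For `i < j` this makes the digit of `L_i ∩ R_j` at `j`
equal to `κ(L_i, j)` and its digit at `i` equal to `κ(R_j, i)`; for `j < i` both digits are
the opposite ones.
-/

section SingleDigit

variable {N : ℕ} {f : CubeFace N} {a p : Fin N}

lemma card_asterisks_before_of_single_digit (hf : ∀ q, f q = none ↔ q ≠ a) :
    (Finset.filter (fun q => q < p ∧ f q = none) Finset.univ).card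
      = if a < p then (p : ℕ) - 1 else p := by
  have hset : Finset.filter (fun q => q < p ∧ f q = none) Finset.univ =
      (Finset.Iio p).erase a := by
    ext q
    simp [hf, and_comm]
  rw [hset]
  split_ifs with h
  · rw [Finset.card_erase_of_mem (Finset.mem_Iio.mpr h), Fin.card_Iio]
  · rw [Finset.erase_eq_of_notMem (by simpa using h), Fin.card_Iio]

lemma kappa_of_single_digit_of_lt (hf : ∀ q, f q = none ↔ q ≠ a) (h : a < p) :
    kappa f p = decide (Even (p : ℕ)) := by
  have hp : 1 ≤ (p : ℕ) := by have := Fin.lt_def.mp h; omega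
  rw [kappa, card_asterisks_before_of_single_digit hf, if_pos h, decide_eq_decide,
    Nat.odd_sub hp]
  simp

lemma kappa_of_single_digit_of_gt (hf : ∀ q, f q = none ↔ q ≠ a) (h : p < a) :
    kappa f p = decide (Odd (p : ℕ)) := by
  rw [kappa, card_asterisks_before_of_single_digit hf, if_neg h.asymm]

end SingleDigit

section LRcap

variable {n : ℕ} {i j : Fin (n + 1)}

lemma Lface_eq_none_iff (q : Fin (n + 1)) : Lface n i q = none ↔ q ≠ i := by
  by_cases h : q = i <;> simp [Lface, h]

lemma Rface_eq_none_iff (q : Fin (n + 1)) : Rface n j q = none ↔ q ≠ j := by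
  by_cases h : q = j <;> simp [Rface, h]

lemma isFace_LRcap (hij : i ≠ j) : IsFace (n - 1) (LRcap n i j) := by
  have hset : Finset.filter (fun q => LRcap n i j q = none) Finset.univ =
      Finset.univ \ {i, j} := by
    ext q
    rw [Finset.mem_filter]
    by_cases hi : q = i <;> by_cases hj : q = j <;> simp [LRcap, hi, hj, hij, hij.symm]
  rw [IsFace, hset, Finset.card_sdiff_of_subset (Finset.subset_univ _), Finset.card_pair hij]
  simp

lemma subfaceAt_Lface_LRcap (hij : i ≠ j) :
    SubfaceAt (Lface n i) (LRcap n i j) j (decide (Even (j : ℕ))) := by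
  refine ⟨(Lface_eq_none_iff j).mpr hij.symm, by simp [LRcap, hij.symm], fun q hq => ?_⟩
  by_cases h : q = i <;> simp [LRcap, Lface, h, hq]

lemma subfaceAt_Rface_LRcap (hij : i ≠ j) :
    SubfaceAt (Rface n j) (LRcap n i j) i (decide (Odd (i : ℕ))) := by
  refine ⟨(Rface_eq_none_iff i).mpr hij, by simp [LRcap], fun q hq => ?_⟩
  by_cases h : q = j <;> simp [LRcap, Rface, h, hq, hij.symm]

end LRcap

theorem stmt4_general (n : ℕ) (i j : Fin (n + 1)) (hij : i ≠ j) :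
    IsFace (n - 1) (LRcap n i j) ∧
    ((Incoming (Lface n i) (LRcap n i j) ∧ Incoming (Rface n j) (LRcap n i j)) ∨
     (Outgoing (Lface n i) (LRcap n i j) ∧ Outgoing (Rface n j) (LRcap n i j))) := by
  have hL := subfaceAt_Lface_LRcap hij
  have hR := subfaceAt_Rface_LRcap hij
  refine ⟨isFace_LRcap hij, ?_⟩
  rcases hij.lt_or_gt with hlt | hgt
  · left
    rw [← kappa_of_single_digit_of_lt Lface_eq_none_iff hlt] at hL
    rw [← kappa_of_single_digit_of_gt Rface_eq_none_iff hlt] at hR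
    exact ⟨⟨j, hL⟩, ⟨i, hR⟩⟩
  · right
    have hLdigit : decide (Even (j : ℕ)) = !kappa (Lface n i) j := by
      rw [kappa_of_single_digit_of_gt Lface_eq_none_iff hgt]
      simp only [← decide_not, Nat.not_odd_iff_even]
    have hRdigit : decide (Odd (i : ℕ)) = !kappa (Rface n j) i := by
      rw [kappa_of_single_digit_of_lt Rface_eq_none_iff hgt]
      simp only [← decide_not, Nat.not_even_iff_odd]
    exact ⟨⟨j, hLdigit ▸ hL⟩, ⟨i, hRdigit ▸ hR⟩⟩

/-- For `i ≠ j`, the `(n-1)`-face `L_i ∩ R_j` is either an incoming subface of both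
`L_i` and `R_j`, or an outgoing subface of both. -/
theorem stmt4 (n : ℕ) (hn : 2 ≤ n) (i j : Fin (n + 1)) (hij : i ≠ j) :
    IsFace (n - 1) (LRcap n i j) ∧
    ((Incoming (Lface n i) (LRcap n i j) ∧ Incoming (Rface n j) (LRcap n i j)) ∨
     (Outgoing (Lface n i) (LRcap n i j) ∧ Outgoing (Rface n j) (LRcap n i j))) :=
  stmt4_general n i j hij
end

section
/- Let n ≥ 2, N ≥ n+1, X a set and R : X^n → X^n, and let c be a permitted coloring of I^N with respect to R. Fix a position m with 1 ≤ m ≤ N and a digit d ∈ {0,1}, and let ι be the map from faces of I^{N−1} to faces of I^N that inserts the symbol d at position m (shifting the remaining symbols). Then the coloring of I^{N−1} defined by g ↦ c(ι(g)) on (n−1)-faces g of I^{N−1} is a permitted coloring of I^{N−1}. -/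
/-- The incoming subface of an `n`-face `f` obtained by replacing the asterisk at
position `p` by the digit `κ(f, p)`. -/
def inAt {N : ℕ} (f : CubeFace N) (p : Fin N) : CubeFace N :=
  fun q => if q = p then some (kappa f p) else f q

/-- The outgoing subface of an `n`-face `f` obtained by replacing the asterisk at
position `p` by the digit different from `κ(f, p)`. -/
def outAt {N : ℕ} (f : CubeFace N) (p : Fin N) : CubeFace N :=
  fun q => if q = p then some (!kappa f p) else f q

/-- A coloring `c` (a map assigning colors, in particular to the `(n-1)`-faces of
`I^N`) is permitted with respect to `R : Xⁿ → Xⁿ` if for every `n`-face `f`, with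
asterisk positions enumerated in increasing order by `p : Fin n → Fin N`, the colors of
its outgoing `(n-1)`-subfaces (listed in increasing order of the replaced asterisk
position) are the image under `R` of the colors of its incoming `(n-1)`-subfaces
(listed likewise). -/
def Permitted {N n : ℕ} {X : Type*} (R : (Fin n → X) → (Fin n → X))
    (c : CubeFace N → X) : Prop :=
  ∀ f : CubeFace N, IsFace n f →
    ∀ p : Fin n → Fin N, StrictMono p → (∀ k, f (p k) = none) →
      (fun k => c (outAt f (p k))) = R (fun k => c (inAt f (p k)))

/- Inserting a digit at position `m` does not create asterisks, so `succAbove m` is a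
bijection between the asterisk positions of `g` and those of `m.insertNth (some d) g`
which preserves their order. Hence it preserves the dimension of a face, the digits `κ`,
and the incoming and outgoing subfaces, so every `n`-face condition for the restricted
coloring is an `n`-face condition for `c`. -/

open Finset

lemma Fin.card_filter_univ_succAbove {M : ℕ} (m : Fin (M + 1)) (P : Fin (M + 1) → Prop)
    [DecidablePred P] (hm : ¬ P m) :
    #{i | P i} = #{i : Fin M | P (m.succAbove i)} := by
  simp only [card_filter, Fin.sum_univ_succAbove _ m, if_neg hm, zero_add]

section insertNth

variable {M : ℕ} (m : Fin (M + 1)) (d : Bool) (g : CubeFace M)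

lemma IsFace.insertNth {k : ℕ} (hg : IsFace k g) : IsFace k (m.insertNth (some d) g) := by
  unfold IsFace at hg ⊢
  rw [Fin.card_filter_univ_succAbove m _ (by simp)]
  simpa using hg

lemma kappa_insertNth_succAbove (q : Fin M) :
    kappa (m.insertNth (some d) g) (m.succAbove q) = kappa g q := by
  unfold kappa
  rw [Fin.card_filter_univ_succAbove m _ (by simp)]
  simp [Fin.succAbove_lt_succAbove_iff]

lemma inAt_eq_update {N : ℕ} (f : CubeFace N) (p : Fin N) :
    inAt f p = Function.update f p (some (kappa f p)) := by
  funext q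
  simp [inAt, Function.update_apply]

lemma outAt_eq_update {N : ℕ} (f : CubeFace N) (p : Fin N) :
    outAt f p = Function.update f p (some (!kappa f p)) := by
  funext q
  simp [outAt, Function.update_apply]

lemma inAt_insertNth_succAbove (q : Fin M) :
    inAt (m.insertNth (some d) g) (m.succAbove q) = m.insertNth (some d) (inAt g q) := by
  rw [inAt_eq_update, inAt_eq_update, kappa_insertNth_succAbove, Fin.insertNth_update]

lemma outAt_insertNth_succAbove (q : Fin M) :
    outAt (m.insertNth (some d) g) (m.succAbove q) = m.insertNth (some d) (outAt g q) := by
  rw [outAt_eq_update, outAt_eq_update, kappa_insertNth_succAbove, Fin.insertNth_update]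

end insertNth

theorem stmt10_general (n M : ℕ) (X : Type*)
    (R : (Fin n → X) → (Fin n → X))
    (c : CubeFace (M + 1) → X) (hc : Permitted R c) (m : Fin (M + 1)) (d : Bool) :
    Permitted R (fun g : CubeFace M => c (m.insertNth (some d) g)) := by
  intro g hg p hp hast
  have key := hc (m.insertNth (some d) g) (hg.insertNth m d) (fun k => m.succAbove (p k))
    ((Fin.strictMono_succAbove m).comp hp) (by simpa [Fin.insertNth_apply_succAbove])
  simpa only [inAt_insertNth_succAbove, outAt_insertNth_succAbove] using key

/-- Restricting a permitted coloring of `I^{M+1}` along the face inclusion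
`ι` of `I^M` into `I^{M+1}` that inserts the digit `d` at position `m` yields a
permitted coloring of `I^M`. -/
theorem stmt10 (n M : ℕ) (hn : 2 ≤ n) (hM : n ≤ M) (X : Type*)
    (R : (Fin n → X) → (Fin n → X))
    (c : CubeFace (M + 1) → X) (hc : Permitted R c) (m : Fin (M + 1)) (d : Bool) :
    Permitted R (fun g : CubeFace M => c (m.insertNth (some d) g)) :=
  stmt10_general n M X R c hc m d
end

section
/- Let X = {x ∈ ℤ/25ℤ : x ≡ 2 (mod 5)} and let R : X³ → X³ be the restriction of the electric map R(x,y,z) = (xy·w⁻¹, w, yz·w⁻¹), w = x + z + xyz (which is well defined on X³). Then: (1) there exists a group homomorphism η : (ℤ/25ℤ)ˣ → ℂˣ with η(7) ≠ 1; (2) for every such η, the function φ(x,y,z) = η(y) (well defined since every element of X is a unit of ℤ/25ℤ) is a multiplicative tetrahedral 3-cocycle for R that is not a coboundary: there is no function ψ : X → ℂˣ such that η(y) = ψ(x)ψ(y)ψ(z)·(ψ(x')ψ(y')ψ(z'))⁻¹ for all (x,y,z) ∈ X³, where (x',y',z') = R(x,y,z). -/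
/-- `φ : Y³ → G` is a multiplicative tetrahedral 3-cocycle for `R : Y³ → Y³`: for all
`a₁, …, a₆`, with the intermediate values defined by the left-hand-side composition
`(a₁',a₂',a₃') = R(a₁,a₂,a₃)`, `(a₁'',a₄',a₅') = R(a₁',a₄,a₅)`,
`(a₂'',a₄'',a₆') = R(a₂',a₄',a₆)`, `(a₃'',a₅'',a₆'') = R(a₃',a₅',a₆')` and the
right-hand-side composition `(b₃,b₅,b₆) = R(a₃,a₅,a₆)`, `(b₂,b₄,c₆) = R(a₂,a₄,b₆)`,
`(b₁,c₄,c₅) = R(a₁,b₄,b₅)`, `(c₁,c₂,c₃) = R(b₁,b₂,b₃)`, one has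
`φ(a₁,a₂,a₃)φ(a₁',a₄,a₅)φ(a₂',a₄',a₆)φ(a₃',a₅',a₆') =
 φ(a₃,a₅,a₆)φ(a₂,a₄,b₆)φ(a₁,b₄,b₅)φ(b₁,b₂,b₃)`. -/
def Cocycle3 {Y G : Type*} [CommGroup G]
    (R : Y × Y × Y → Y × Y × Y) (φ : Y × Y × Y → G) : Prop :=
  ∀ a1 a2 a3 a4 a5 a6 a1' a2' a3' a1'' a4' a5' a2'' a4'' a6' a3'' a5'' a6''
      b1 b2 b3 b4 b5 b6 c1 c2 c3 c4 c5 c6 : Y,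
    (a1', a2', a3') = R (a1, a2, a3) → (a1'', a4', a5') = R (a1', a4, a5) →
    (a2'', a4'', a6') = R (a2', a4', a6) → (a3'', a5'', a6'') = R (a3', a5', a6') →
    (b3, b5, b6) = R (a3, a5, a6) → (b2, b4, c6) = R (a2, a4, b6) →
    (b1, c4, c5) = R (a1, b4, b5) → (c1, c2, c3) = R (b1, b2, b3) →
    φ (a1, a2, a3) * φ (a1', a4, a5) * φ (a2', a4', a6) * φ (a3', a5', a6') =
      φ (a3, a5, a6) * φ (a2, a4, b6) * φ (a1, b4, b5) * φ (b1, b2, b3)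

/-- `φ` is a multiplicative tetrahedral 3-coboundary (of some `ψ`) for `R`. -/
def IsCoboundary {Y G : Type*} [CommGroup G]
    (R : Y × Y × Y → Y × Y × Y) (φ : Y × Y × Y → G) : Prop :=
  ∃ ψ : Y → G, ∀ t : Y × Y × Y,
    φ t = ψ t.1 * ψ t.2.1 * ψ t.2.2 *
            (ψ (R t).1 * ψ (R t).2.1 * ψ (R t).2.2)⁻¹

/-!
The electric map conserves the products `x·y` and `y·z`: with `(x', y', z') = R(x, y, z)` one has
`x'y' = xy` and `y'z' = yz`. Hence for a character `η`, the middle-component function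
`φ(x, y, z) = η(y)` is a cocycle: both sides of the tetrahedral relation collapse to
`η(a₂a₄²a₅)`. It is not a coboundary because `(2, 7, 2)` is a fixed point of `R`
(there `w = 32 = 7`), where every coboundary is `1` while `φ(2, 7, 2) = η(7) ≠ 1`.
-/

theorem cocycle3_of_mul_conserved {Y G : Type*} [CommGroup G]
    (R : Y × Y × Y → Y × Y × Y) (f : Y → G)
    (hxy : ∀ t, f (R t).1 * f (R t).2.1 = f t.1 * f t.2.1)
    (hyz : ∀ t, f (R t).2.1 * f (R t).2.2 = f t.2.1 * f t.2.2) :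
    Cocycle3 R (fun t => f t.2.1) := by
  intro a1 a2 a3 a4 a5 a6 a1' a2' a3' a1'' a4' a5' a2'' a4'' a6' a3'' a5'' a6''
    b1 b2 b3 b4 b5 b6 c1 c2 c3 c4 c5 c6 _ h2 _ _ _ h6 _ _
  have h45 : f a4' * f a5' = f a4 * f a5 := by
    simpa only [← h2] using hyz (a1', a4, a5)
  have h24 : f b2 * f b4 = f a2 * f a4 := by
    simpa only [← h6] using hxy (a2, a4, b6)
  calc f a2 * f a4 * f a4' * f a5' = f a2 * f a4 * (f a4 * f a5) := by rw [mul_assoc, h45]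
    _ = f a5 * f a4 * (f b2 * f b4) := by rw [h24]; ac_rfl
    _ = f a5 * f a4 * f b4 * f b2 := by ac_rfl

theorem not_isCoboundary_of_map_eq_self {Y G : Type*} [CommGroup G]
    (R : Y × Y × Y → Y × Y × Y) (φ : Y × Y × Y → G) {t : Y × Y × Y}
    (hRt : R t = t) (hφt : φ t ≠ 1) : ¬ IsCoboundary R φ := by
  rintro ⟨ψ, hψ⟩
  exact hφt (by rw [hψ t, hRt, mul_inv_cancel])

section ElectricMap

variable {n : ℕ} {p : ZMod n → Prop}

def IsElectricMap
    (R : Subtype p × Subtype p × Subtype p → Subtype p × Subtype p × Subtype p) : Prop :=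
  ∀ t, (R t).1.val
          = t.1.val * t.2.1.val *
              (t.1.val + t.2.2.val + t.1.val * t.2.1.val * t.2.2.val)⁻¹ ∧
        (R t).2.1.val
          = t.1.val + t.2.2.val + t.1.val * t.2.1.val * t.2.2.val ∧
        (R t).2.2.val
          = t.2.1.val * t.2.2.val *
              (t.1.val + t.2.2.val + t.1.val * t.2.1.val * t.2.2.val)⁻¹

variable {R : Subtype p × Subtype p × Subtype p → Subtype p × Subtype p × Subtype p}

theorem IsElectricMap.fst_mul_mid (hR : IsElectricMap R) (t : Subtype p × Subtype p × Subtype p)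
    (hw : IsUnit (R t).2.1.val) : (R t).1.val * (R t).2.1.val = t.1.val * t.2.1.val := by
  obtain ⟨h1, h2, -⟩ := hR t
  rw [h1, ← h2, mul_assoc, ZMod.inv_mul_of_unit _ hw, mul_one]

theorem IsElectricMap.mid_mul_last (hR : IsElectricMap R) (t : Subtype p × Subtype p × Subtype p)
    (hw : IsUnit (R t).2.1.val) : (R t).2.1.val * (R t).2.2.val = t.2.1.val * t.2.2.val := by
  obtain ⟨-, h2, h3⟩ := hR t
  rw [h3, ← h2, mul_comm, mul_assoc, ZMod.inv_mul_of_unit _ hw, mul_one]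

end ElectricMap

theorem IsElectricMap.map_two_seven_two {p : ZMod 25 → Prop} {R : Subtype p × Subtype p ×
    Subtype p → Subtype p × Subtype p × Subtype p} (hR : IsElectricMap R) (h2 : p 2) (h7 : p 7) :
    R (⟨2, h2⟩, ⟨7, h7⟩, ⟨2, h2⟩) = (⟨2, h2⟩, ⟨7, h7⟩, ⟨2, h2⟩) := by
  have hw : (2 + 2 + 2 * 7 * 2 : ZMod 25) = 7 := by decide
  have h7u : IsUnit (7 : ZMod 25) := by decide
  obtain ⟨hx, hy, hz⟩ := hR (⟨2, h2⟩, ⟨7, h7⟩, ⟨2, h2⟩)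
  simp only [hw] at hx hy hz
  ext
  · rw [hx, mul_assoc, ZMod.mul_inv_of_unit _ h7u, mul_one]
  · exact hy
  · rw [hz, mul_comm, ← mul_assoc, ZMod.inv_mul_of_unit _ h7u, one_mul]

theorem ZMod.isUnit_of_castHom_five_eq_two {x : ZMod 25}
    (hx : ZMod.castHom (by norm_num : (5 : ℕ) ∣ 25) (ZMod 5) x = 2) : IsUnit x := by
  revert x
  decide

theorem ZMod.exists_monoidHom_units_ne_one {n : ℕ} [NeZero n] {a : ZMod n} (ha1 : a ≠ 1) :
    ∃ η : (ZMod n)ˣ →* ℂˣ, ∀ u : (ZMod n)ˣ, (u : ZMod n) = a → η u ≠ 1 := by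
  by_cases ha : IsUnit a
  · obtain ⟨η, hη⟩ := CommGroup.exists_apply_ne_one_of_hasEnoughRootsOfUnity (ZMod n)ˣ ℂ
      (a := ha.unit) (by simpa [← Units.val_eq_one] using ha1)
    exact ⟨η, fun u hu => by rwa [show u = ha.unit from Units.ext hu]⟩
  · exact ⟨1, fun u hu => absurd (hu ▸ u.isUnit) ha⟩

/-- Let `X = {x ∈ ℤ/25ℤ : x ≡ 2 (mod 5)}` and let `R : X³ → X³` be the restriction of
the electric map `(x,y,z) ↦ (xy·w⁻¹, w, yz·w⁻¹)`, `w = x + z + xyz`.  Then: (1) there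
is a group homomorphism `η : (ℤ/25ℤ)ˣ → ℂˣ` with `η(7) ≠ 1`; and (2) for every such
`η`, the function `φ(x,y,z) = η(y)` is a multiplicative tetrahedral 3-cocycle for `R`
that is not a coboundary. -/
theorem stmt19 (red : ZMod 25 →+* ZMod 5)
    (hred : red = ZMod.castHom (by norm_num : (5 : ℕ) ∣ 25) (ZMod 5)) :
    (∃ η : (ZMod 25)ˣ →* ℂˣ,
      ∀ u : (ZMod 25)ˣ, (u : ZMod 25) = 7 → η u ≠ 1) ∧
    (∀ η : (ZMod 25)ˣ →* ℂˣ,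
      (∀ u : (ZMod 25)ˣ, (u : ZMod 25) = 7 → η u ≠ 1) →
      ∀ R : {x : ZMod 25 // red x = 2} × {x : ZMod 25 // red x = 2} ×
              {x : ZMod 25 // red x = 2} →
            {x : ZMod 25 // red x = 2} × {x : ZMod 25 // red x = 2} ×
              {x : ZMod 25 // red x = 2},
        (∀ t, (R t).1.val
                = t.1.val * t.2.1.val *
                    (t.1.val + t.2.2.val + t.1.val * t.2.1.val * t.2.2.val)⁻¹ ∧
              (R t).2.1.val
                = t.1.val + t.2.2.val + t.1.val * t.2.1.val * t.2.2.val ∧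
              (R t).2.2.val
                = t.2.1.val * t.2.2.val *
                    (t.1.val + t.2.2.val + t.1.val * t.2.1.val * t.2.2.val)⁻¹) →
        ∀ φ : {x : ZMod 25 // red x = 2} × {x : ZMod 25 // red x = 2} ×
                {x : ZMod 25 // red x = 2} → ℂˣ,
          (∀ t, ∀ u : (ZMod 25)ˣ, (u : ZMod 25) = t.2.1.val → φ t = η u) →
          Cocycle3 R φ ∧ ¬ IsCoboundary R φ) := by
  subst hred
  refine ⟨ZMod.exists_monoidHom_units_ne_one (by decide), fun η hη R hR φ hφ => ?_⟩
  replace hR : IsElectricMap R := hR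
  have hunit (x : {x : ZMod 25 // _ = 2}) : IsUnit x.val := ZMod.isUnit_of_castHom_five_eq_two x.2
  obtain rfl : φ = fun t => η (hunit t.2.1).unit := funext fun t => hφ t _ (hunit _).unit_spec
  constructor
  · refine cocycle3_of_mul_conserved R (fun y => η (hunit y).unit) (fun t => ?_) (fun t => ?_) <;>
      simp only [← map_mul]
    · exact congrArg η (Units.ext (hR.fst_mul_mid t (hunit _)))
    · exact congrArg η (Units.ext (hR.mid_mul_last t (hunit _)))
  · have h2 : ZMod.castHom (by norm_num : (5 : ℕ) ∣ 25) (ZMod 5) (2 : ZMod 25) = 2 := by decide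
    have h7 : ZMod.castHom (by norm_num : (5 : ℕ) ∣ 25) (ZMod 5) (7 : ZMod 25) = 2 := by decide
    refine not_isCoboundary_of_map_eq_self R _ (hR.map_two_seven_two h2 h7) ?_
    exact hη _ (hunit ⟨7, h7⟩).unit_spec
end
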